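/- Residual bound for approximate inverse iteration: with M symmetric, λ̄ satisfying |λ₁(M) − λ̄| ≤ δ, λ̄ not an eigenvalue, x = (M − λ̄I)^{−1} e_{j₀} where j₀ maximizes ‖(M − λ̄I)^{−1} e_j‖₂, and z = x/‖x‖₂, one has ‖(M − λ₁(M)I) z‖₂ ≤ δ√n + δ. -/

import Mathlib

/-!
Let `z₁` be a unit eigenvector for `λ₁`. By symmetry of `T`,
`⟪(T - λ̄) y, z₁⟫ = (λ₁ - λ̄) ⟪y, z₁⟫`, so each coordinate of `z₁` is at most
`|λ₁ - λ̄| ‖A e_j‖ ≤ δ ‖x‖` in absolute value, and `1 = ‖z₁‖ ≤ √n δ ‖x‖`.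
Since `(T - λ₁) w = ‖x‖⁻¹ e_{j₀} + (λ̄ - λ₁) w`, the residual is at most `‖x‖⁻¹ + δ ≤ δ√n + δ`.
-/

open scoped RealInnerProductSpace

variable {E : Type*} [NormedAddCommGroup E] [InnerProductSpace ℝ E]

theorem LinearMap.IsSymmetric.inner_sub_smul_eq_of_apply_eq_smul {T : E →ₗ[ℝ] E}
    (hT : T.IsSymmetric) {u : E} {μ : ℝ} (hu : T u = μ • u) (lamb : ℝ) (y : E) :
    ⟪T y - lamb • y, u⟫ = (μ - lamb) * ⟪y, u⟫ := by
  rw [inner_sub_left, hT, hu, real_inner_smul_left, real_inner_smul_right]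
  ring

theorem one_le_sqrt_card_mul_of_norm_resolvent_basis_le {ι : Type*} [Fintype ι] [Nonempty ι]
    {T : E →ₗ[ℝ] E} (hT : T.IsSymmetric) {u : E} {μ : ℝ} (hu : T u = μ • u) (hu1 : ‖u‖ = 1)
    (b : OrthonormalBasis ι ℝ E) {lamb r : ℝ} (y : ι → E) (hy : ∀ i, T (y i) - lamb • y i = b i)
    (hr : ∀ i, ‖y i‖ ≤ r) :
    1 ≤ √(Fintype.card ι) * (|μ - lamb| * r) := by
  have hcoord : ∀ i, ‖⟪b i, u⟫‖ ≤ |μ - lamb| * r := fun i => by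
    calc ‖⟪b i, u⟫‖ = |μ - lamb| * |⟪y i, u⟫| := by
          rw [← hy, hT.inner_sub_smul_eq_of_apply_eq_smul hu, Real.norm_eq_abs, abs_mul]
      _ ≤ |μ - lamb| * r := by
          gcongr
          exact (abs_real_inner_le_norm _ _).trans (by rw [hu1, mul_one]; exact hr i)
  calc (1 : ℝ) = ‖u‖ := hu1.symm
    _ ≤ √(Fintype.card ι) * ⨆ i, ‖⟪b i, u⟫‖ := b.norm_le_card_mul_iSup_norm_inner u
    _ ≤ √(Fintype.card ι) * (|μ - lamb| * r) := by gcongr; exact ciSup_le hcoord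

theorem norm_apply_normalize_sub_smul_le (T : E →L[ℝ] E) (x : E) (μ lamb : ℝ) :
    ‖T (‖x‖⁻¹ • x) - μ • (‖x‖⁻¹ • x)‖ ≤ ‖x‖⁻¹ * ‖T x - lamb • x‖ + |μ - lamb| := by
  have hsplit : T (‖x‖⁻¹ • x) - μ • (‖x‖⁻¹ • x)
      = ‖x‖⁻¹ • (T x - lamb • x) - (μ - lamb) • (‖x‖⁻¹ • x) := by
    rw [map_smul]; module
  have hw : ‖‖x‖⁻¹ • x‖ ≤ 1 := by
    rw [norm_smul, norm_inv, norm_norm]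
    exact inv_mul_le_one_of_le₀ le_rfl (norm_nonneg x)
  calc _ ≤ ‖‖x‖⁻¹ • (T x - lamb • x)‖ + ‖(μ - lamb) • (‖x‖⁻¹ • x)‖ := by
        rw [hsplit]; exact norm_sub_le _ _
    _ ≤ ‖x‖⁻¹ * ‖T x - lamb • x‖ + |μ - lamb| := by
        rw [norm_smul, norm_smul, norm_inv, norm_norm, Real.norm_eq_abs]
        gcongr
        exact mul_le_of_le_one_right (abs_nonneg _) hw

theorem stmt15_general (n : ℕ) (hn : 0 < n)
    (T : EuclideanSpace ℝ (Fin n) →L[ℝ] EuclideanSpace ℝ (Fin n)) (hT : IsSelfAdjoint T)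
    (μ : Fin n → ℝ)
    (z : Fin n → EuclideanSpace ℝ (Fin n)) (hON : Orthonormal ℝ z)
    (heig : ∀ ℓ, T (z ℓ) = μ ℓ • z ℓ)
    (lamb δ : ℝ)
    (h2 : |μ ⟨0, hn⟩ - lamb| ≤ δ)
    (A : EuclideanSpace ℝ (Fin n) →L[ℝ] EuclideanSpace ℝ (Fin n))
    (hA : ∀ v, T (A v) - lamb • A v = v)
    (j₀ : Fin n)
    (hj₀ : ∀ j : Fin n, ‖A (EuclideanSpace.single j (1:ℝ))‖
            ≤ ‖A (EuclideanSpace.single j₀ (1:ℝ))‖)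
    (x : EuclideanSpace ℝ (Fin n)) (hx : x = A (EuclideanSpace.single j₀ (1:ℝ)))
    (w : EuclideanSpace ℝ (Fin n)) (hw : w = ‖x‖⁻¹ • x) :
    ‖T w - μ ⟨0, hn⟩ • w‖ ≤ δ * Real.sqrt n + δ := by
  have : Nonempty (Fin n) := Fin.pos_iff_nonempty.mp hn
  have hcols : 1 ≤ √n * (|μ ⟨0, hn⟩ - lamb| * ‖x‖) := by
    simpa using one_le_sqrt_card_mul_of_norm_resolvent_basis_le hT.isSymmetric (heig _)
      (hON.1 _) (EuclideanSpace.basisFun (Fin n) ℝ) (fun j => A (EuclideanSpace.single j 1))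
      (fun j => by simpa using hA _) (fun j => hx ▸ hj₀ j)
  have hxpos : 0 < ‖x‖ := by
    by_contra! h
    rw [le_antisymm h (norm_nonneg x), mul_zero, mul_zero] at hcols
    linarith
  have hinv : ‖x‖⁻¹ ≤ δ * √n := by
    rw [inv_le_iff_one_le_mul₀ hxpos]
    calc (1 : ℝ) ≤ √n * (|μ ⟨0, hn⟩ - lamb| * ‖x‖) := hcols
      _ ≤ √n * (δ * ‖x‖) := by gcongr
      _ = δ * √n * ‖x‖ := by ring
  have hresidual_x : ‖T x - lamb • x‖ = 1 := by rw [hx, hA, PiLp.norm_single, norm_one]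
  calc ‖T w - μ ⟨0, hn⟩ • w‖ ≤ ‖x‖⁻¹ * ‖T x - lamb • x‖ + |μ ⟨0, hn⟩ - lamb| :=
        hw ▸ norm_apply_normalize_sub_smul_le T x _ lamb
    _ ≤ δ * √n + δ := by rw [hresidual_x, mul_one]; linarith

/-- Residual bound for approximate inverse iteration: with `T` symmetric on `ℝⁿ`,
orthonormal eigenvectors `z_ℓ`, sorted eigenvalues `μ_ℓ` (smallest `μ₁ = λ₁`),
`λ̄` a noneigenvalue with `|λ₁ − λ̄| ≤ δ`, `A = (T − λ̄ I)⁻¹`, `x = A e_{j₀}` where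
`j₀` maximizes `‖A e_j‖`, and `w = x/‖x‖`, one has `‖(T − λ₁ I) w‖ ≤ δ√n + δ`. -/
theorem stmt15 (n : ℕ) (hn : 0 < n)
    (T : EuclideanSpace ℝ (Fin n) →L[ℝ] EuclideanSpace ℝ (Fin n)) (hT : IsSelfAdjoint T)
    (μ : Fin n → ℝ) (hmono : Monotone μ)
    (z : Fin n → EuclideanSpace ℝ (Fin n)) (hON : Orthonormal ℝ z)
    (heig : ∀ ℓ, T (z ℓ) = μ ℓ • z ℓ)
    (lamb δ : ℝ) (hδ : 0 < δ)
    (h1 : 0 < |μ ⟨0, hn⟩ - lamb|) (h2 : |μ ⟨0, hn⟩ - lamb| ≤ δ)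
    (hne : ∀ ℓ, μ ℓ ≠ lamb)
    (A : EuclideanSpace ℝ (Fin n) →L[ℝ] EuclideanSpace ℝ (Fin n))
    (hA : ∀ v, T (A v) - lamb • A v = v)
    (j₀ : Fin n)
    (hj₀ : ∀ j : Fin n, ‖A (EuclideanSpace.single j (1:ℝ))‖
            ≤ ‖A (EuclideanSpace.single j₀ (1:ℝ))‖)
    (x : EuclideanSpace ℝ (Fin n)) (hx : x = A (EuclideanSpace.single j₀ (1:ℝ)))
    (hx0 : x ≠ 0)
    (w : EuclideanSpace ℝ (Fin n)) (hw : w = ‖x‖⁻¹ • x) :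
    ‖T w - μ ⟨0, hn⟩ • w‖ ≤ δ * Real.sqrt n + δ :=
  stmt15_general n hn T hT μ z hON heig lamb δ h2 A hA j₀ hj₀ x hx w hw
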